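/- Let N ≥ 2, let {Q₁, Q₂} be a basis of ℤ/Nℤ ⊕ ℤ/Nℤ, and let A = [[a,b],[c,d]] ∈ SL₂(ℤ) with A ≡ ±I (mod N). Then for every τ in the complex upper half plane, Λ((aτ+b)/(cτ+d); Q₁, Q₂) = Λ(τ; Q₁, Q₂). -/

import Mathlib

open Complex

/-- The Weierstrass ℘-function of the lattice `L_τ = ℤ + ℤτ`. -/
noncomputable def wp (τ z : ℂ) : ℂ :=
  1 / z ^ 2 +
    ∑' p : {p : ℤ × ℤ // p ≠ 0},
      (1 / (z - ((p.1.1 : ℂ) + (p.1.2 : ℂ) * τ)) ^ 2 -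
        1 / ((p.1.1 : ℂ) + (p.1.2 : ℂ) * τ) ^ 2)

/-- `E(τ; r, s) = (2πi)⁻² ℘((rτ+s)/N; L_τ) − 1/12`. -/
noncomputable def Efun (N : ℕ) (r s : ℤ) (τ : ℂ) : ℂ :=
  (2 * (Real.pi : ℂ) * Complex.I) ^ (-2 : ℤ) *
    wp τ (((r : ℂ) * τ + (s : ℂ)) / (N : ℂ)) - 1 / 12

/-- `ζ = exp(2πi/N)`. -/
noncomputable def zetaN (N : ℕ) : ℂ := Complex.exp (2 * (Real.pi : ℂ) * Complex.I / (N : ℂ))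

/-- `q = exp(2πiτ/N)`. -/
noncomputable def qN (N : ℕ) (τ : ℂ) : ℂ :=
  Complex.exp (2 * (Real.pi : ℂ) * Complex.I * τ / (N : ℂ))

/-- `{x}`: the unique integer with `0 ≤ {x} ≤ N/2` and `x ≡ μ(x){x} (mod N)`. -/
def brace (N : ℕ) (x : ℤ) : ℤ := min (x % (N : ℤ)) ((N : ℤ) - x % (N : ℤ))

/-- The sign `μ(x) ∈ {±1}`, with `μ(x) = 1` when `x ≡ 0, N/2 (mod N)`. -/
def mu (N : ℕ) (x : ℤ) : ℤ := if x % (N : ℤ) ≤ (N : ℤ) - x % (N : ℤ) then 1 else -1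

/-- `ω = ζ^{μ(r)s}`. -/
noncomputable def omegaE (N : ℕ) (r s : ℤ) : ℂ := zetaN N ^ (mu N r * s)

/-- `u = ω q^{{r}}`. -/
noncomputable def uE (N : ℕ) (r s : ℤ) (τ : ℂ) : ℂ := omegaE N r s * qN N τ ^ brace N r

/-- `Λ_k(τ) = (E(τ;1,0) − E(τ;1,k))/(E(τ;0,k) − E(τ;1,k))`. -/
noncomputable def LambdaK (N : ℕ) (k : ℤ) (τ : ℂ) : ℂ :=
  (Efun N 1 0 τ - Efun N 1 k τ) / (Efun N 0 k τ - Efun N 1 k τ)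

/-- `φ_τ(Q) = (rτ+s)/N` for the representative `(r,s)` with `0 ≤ r,s < N`. -/
noncomputable def phiPt (N : ℕ) (τ : ℂ) (Q : ZMod N × ZMod N) : ℂ :=
  ((Q.1.val : ℂ) * τ + (Q.2.val : ℂ)) / (N : ℂ)

/-- The generalized lambda function `Λ(τ; Q₁, Q₂)`. -/
noncomputable def LambdaB (N : ℕ) (Q₁ Q₂ : ZMod N × ZMod N) (τ : ℂ) : ℂ :=
  (wp τ (phiPt N τ Q₁) - wp τ (phiPt N τ (Q₁ + Q₂))) /
    (wp τ (phiPt N τ Q₂) - wp τ (phiPt N τ (Q₁ + Q₂)))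

open Classical in
/-- The constant `C_N`. -/
noncomputable def CN (N : ℕ) : ℕ :=
  if N = 2 then 2 ^ 4
  else if IsPrimePow N then (if N.minFac ≤ 3 then N.minFac ^ 2 else N.minFac)
  else 1

/-- `g₂(τ) = 60 Σ' ω⁻⁴`. -/
noncomputable def g2 (τ : ℂ) : ℂ :=
  60 * ∑' p : {p : ℤ × ℤ // p ≠ 0}, (((p.1.1 : ℂ) + (p.1.2 : ℂ) * τ) ^ 4)⁻¹

/-- `g₃(τ) = 140 Σ' ω⁻⁶`. -/
noncomputable def g3 (τ : ℂ) : ℂ :=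
  140 * ∑' p : {p : ℤ × ℤ // p ≠ 0}, (((p.1.1 : ℂ) + (p.1.2 : ℂ) * τ) ^ 6)⁻¹

/-- The modular invariant `j(τ)`. -/
noncomputable def jInv (τ : ℂ) : ℂ := 1728 * g2 τ ^ 3 / (g2 τ ^ 3 - 27 * g3 τ ^ 2)

/-!
For `γ = [[a, b], [c, d]] ∈ SL₂(ℤ)` and `j = cτ + d`, the lattice `L_{γτ}` is `j⁻¹ L_τ`, so
`℘(z; L_{γτ}) = j² ℘(jz; L_τ)`. When `γ ≡ ±I (mod N)`, the point `j φ_{γτ}(Q)` is congruent to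
`±φ_τ(Q)` modulo `L_τ`, so by periodicity and evenness of `℘` each of the three `℘`-values in
`Λ(γτ; Q₁, Q₂)` is `j²` times the corresponding value at `τ`, and the factor `j²` cancels.
-/

open PeriodPair

lemma linearIndependent_one_of_im_ne_zero {τ : ℂ} (hτ : τ.im ≠ 0) :
    LinearIndependent ℝ ![1, τ] := by
  refine LinearIndependent.pair_iff.mpr fun s t hst => ?_
  have him : t * τ.im = 0 := by simpa using congrArg Complex.im hst
  have ht : t = 0 := (mul_eq_zero.mp him).resolve_right hτ
  subst ht
  simpa using hst

noncomputable def PeriodPair.ofTau (τ : ℂ) (hτ : τ.im ≠ 0) : PeriodPair :=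
  ⟨1, τ, linearIndependent_one_of_im_ne_zero hτ⟩

lemma PeriodPair.mem_lattice_ofTau {τ : ℂ} {hτ : τ.im ≠ 0} {x : ℂ} :
    x ∈ (ofTau τ hτ).lattice ↔ ∃ m n : ℤ, m + n * τ = x := by
  simp [mem_lattice, ofTau]

lemma PeriodPair.weierstrassP_eq_sq_mul_of_mem_lattice_iff {L L' : PeriodPair} {c : ℂ}
    (hc : c ≠ 0) (h : ∀ x, x ∈ L'.lattice ↔ c * x ∈ L.lattice) (z : ℂ) :
    ℘[L'] z = c ^ 2 * ℘[L] (c * z) := by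
  rw [weierstrassP, weierstrassP, ← ((Equiv.mulLeft₀ c hc).subtypeEquiv h).tsum_eq,
    ← tsum_mul_left]
  congr 1 with l
  change _ = c ^ 2 * (1 / (c * z - c * l) ^ 2 - 1 / (c * l) ^ 2)
  rw [← mul_sub, mul_pow, mul_pow]
  simp only [one_div, mul_inv, ← mul_sub, ← mul_assoc, mul_inv_cancel₀ (pow_ne_zero 2 hc),
    one_mul]

lemma wp_eq_weierstrassP {τ : ℂ} (hτ : τ.im ≠ 0) (z : ℂ) : wp τ z = ℘[ofTau τ hτ] z := by
  set L := ofTau τ hτ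
  have hL (p : ℤ × ℤ) : (L.latticeEquivProd.symm p : ℂ) = p.1 + p.2 * τ := by
    simpa [L, ofTau] using L.latticeEquiv_symm_apply p
  have hsum := (L.latticeEquivProd.symm.toEquiv.hasSum_iff).mpr (L.hasSum_weierstrassP z)
  -- Mathlib's sum runs over the whole lattice: its `l = 0` term is `1/z² - 1/0² = 1/z²`.
  rw [← hsum.tsum_eq, ← hsum.summable.tsum_subtype_add_tsum_subtype_compl {0}, tsum_singleton]
  simp only [Function.comp_apply, LinearEquiv.coe_toEquiv, hL, wp]
  congr 1
  simp

lemma wp_div_eq_of_modEq {τ : ℂ} (hτ : τ.im ≠ 0) {N : ℕ} {r s r' s' ε : ℤ}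
    (hε : ε = 1 ∨ ε = -1) (hr : r' ≡ ε * r [ZMOD N]) (hs : s' ≡ ε * s [ZMOD N]) :
    wp τ ((r' * τ + s') / N) = wp τ ((r * τ + s) / N) := by
  obtain ⟨k, hk⟩ := hr.dvd
  obtain ⟨l, hl⟩ := hs.dvd
  have hmem : (r' * τ + s') / N - ε * ((r * τ + s) / N) ∈ (ofTau τ hτ).lattice := by
    rw [mem_lattice_ofTau]
    rcases eq_or_ne (N : ℂ) 0 with hN | hN
    · exact ⟨0, 0, by simp [hN]⟩
    · refine ⟨-l, -k, ?_⟩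
      have hk' : (ε * r - r' : ℂ) = N * k := by exact_mod_cast hk
      have hl' : (ε * s - s' : ℂ) = N * l := by exact_mod_cast hl
      rw [mul_div_assoc', ← sub_div, eq_div_iff hN]
      push_cast
      linear_combination τ * hk' + hl'
  have hshift := (ofTau τ hτ).weierstrassP_add_coe (ε * ((r * τ + s) / N)) ⟨_, hmem⟩
  rw [add_sub_cancel] at hshift
  rw [wp_eq_weierstrassP hτ, wp_eq_weierstrassP hτ, hshift]
  rcases hε with rfl | rfl <;> simp

lemma int_mul_add_int_ne_zero {a b c d : ℤ} (hdet : a * d - b * c = 1) {τ : ℂ}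
    (hτ : τ.im ≠ 0) : (c : ℂ) * τ + d ≠ 0 := by
  intro h
  have hc : c = 0 := by
    have him : (c : ℝ) * τ.im = 0 := by simpa using congrArg Complex.im h
    exact_mod_cast (mul_eq_zero.mp him).resolve_right hτ
  subst hc
  have hd : d = 0 := by simpa using h
  simp [hd] at hdet

lemma im_moebius {a b c d : ℤ} (hdet : a * d - b * c = 1) (τ : ℂ) :
    (((a : ℂ) * τ + b) / (c * τ + d)).im = τ.im / Complex.normSq (c * τ + d) := by
  have hdet' : (a : ℝ) * d - b * c = 1 := by exact_mod_cast hdet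
  rw [Complex.div_im, ← sub_div]
  congr 1
  simp only [Complex.add_im, Complex.add_re, Complex.mul_im, Complex.mul_re,
    Complex.intCast_re, Complex.intCast_im]
  linear_combination τ.im * hdet'

lemma im_moebius_ne_zero {a b c d : ℤ} (hdet : a * d - b * c = 1) {τ : ℂ} (hτ : τ.im ≠ 0) :
    (((a : ℂ) * τ + b) / (c * τ + d)).im ≠ 0 := by
  rw [im_moebius hdet]
  exact div_ne_zero hτ (Complex.normSq_pos.mpr (int_mul_add_int_ne_zero hdet hτ)).ne'

lemma mem_lattice_ofTau_moebius_iff {a b c d : ℤ} (hdet : a * d - b * c = 1) {τ : ℂ}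
    (hτ : τ.im ≠ 0) (x : ℂ) :
    x ∈ (ofTau _ (im_moebius_ne_zero hdet hτ)).lattice ↔
      ((c : ℂ) * τ + d) * x ∈ (ofTau τ hτ).lattice := by
  have hj := int_mul_add_int_ne_zero hdet hτ
  have hdet' : (a : ℂ) * d - b * c = 1 := by exact_mod_cast hdet
  simp only [mem_lattice_ofTau]
  constructor
  · rintro ⟨m, n, rfl⟩
    refine ⟨m * d + n * b, m * c + n * a, ?_⟩
    push_cast
    field_simp
    ring
  · rintro ⟨m, n, hmn⟩
    refine ⟨m * a - n * b, n * d - m * c, ?_⟩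
    push_cast
    field_simp
    linear_combination hmn + (m + n * τ) * hdet'

lemma wp_moebius {a b c d : ℤ} (hdet : a * d - b * c = 1) {τ : ℂ} (hτ : τ.im ≠ 0) (z : ℂ) :
    wp (((a : ℂ) * τ + b) / (c * τ + d)) z = ((c : ℂ) * τ + d) ^ 2 * wp τ ((c * τ + d) * z) := by
  rw [wp_eq_weierstrassP (im_moebius_ne_zero hdet hτ), wp_eq_weierstrassP hτ]
  exact weierstrassP_eq_sq_mul_of_mem_lattice_iff (int_mul_add_int_ne_zero hdet hτ)
    (mem_lattice_ofTau_moebius_iff hdet hτ) z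

lemma wp_phiPt_moebius {N : ℕ} {a b c d ε : ℤ} (hdet : a * d - b * c = 1)
    (hε : ε = 1 ∨ ε = -1) (ha : a ≡ ε [ZMOD N]) (hb : b ≡ 0 [ZMOD N]) (hc : c ≡ 0 [ZMOD N])
    (hd : d ≡ ε [ZMOD N]) {τ : ℂ} (hτ : τ.im ≠ 0) (Q : ZMod N × ZMod N) :
    wp (((a : ℂ) * τ + b) / (c * τ + d)) (phiPt N (((a : ℂ) * τ + b) / (c * τ + d)) Q) =
      ((c : ℂ) * τ + d) ^ 2 * wp τ (phiPt N τ Q) := by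
  set r : ℤ := (Q.1.val : ℤ)
  set s : ℤ := (Q.2.val : ℤ)
  have hj := int_mul_add_int_ne_zero hdet hτ
  have hphi : ((c : ℂ) * τ + d) * phiPt N (((a : ℂ) * τ + b) / (c * τ + d)) Q =
      (((r * a + s * c : ℤ) : ℂ) * τ + (r * b + s * d : ℤ)) / N := by
    simp only [phiPt, r, s]
    push_cast
    field_simp
    ring
  have hphiτ : phiPt N τ Q = (r * τ + s) / N := by simp [phiPt, r, s]
  rw [wp_moebius hdet hτ, hphi, hphiτ, wp_div_eq_of_modEq hτ hε]
  · calc r * a + s * c ≡ r * ε + s * 0 [ZMOD N] := (ha.mul_left r).add (hc.mul_left s)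
      _ = ε * r := by ring
  · calc r * b + s * d ≡ r * 0 + s * ε [ZMOD N] := (hb.mul_left r).add (hd.mul_left s)
      _ = ε * s := by ring

lemma exists_sign_modEq_of_map_eq_one_or_neg_one {N : ℕ} {M : Matrix (Fin 2) (Fin 2) ℤ}
    (h : M.map (Int.cast : ℤ → ZMod N) = 1 ∨ M.map (Int.cast : ℤ → ZMod N) = -1) :
    ∃ ε : ℤ, (ε = 1 ∨ ε = -1) ∧ M 0 0 ≡ ε [ZMOD N] ∧ M 0 1 ≡ 0 [ZMOD N] ∧
      M 1 0 ≡ 0 [ZMOD N] ∧ M 1 1 ≡ ε [ZMOD N] := by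
  have key (ε : ℤ) (hε : M.map (Int.cast : ℤ → ZMod N) = (ε : ZMod N) • 1) :
      M 0 0 ≡ ε [ZMOD N] ∧ M 0 1 ≡ 0 [ZMOD N] ∧ M 1 0 ≡ 0 [ZMOD N] ∧ M 1 1 ≡ ε [ZMOD N] := by
    simp only [← ZMod.intCast_eq_intCast_iff]
    exact ⟨by simpa using congrFun₂ hε 0 0, by simpa using congrFun₂ hε 0 1,
      by simpa using congrFun₂ hε 1 0, by simpa using congrFun₂ hε 1 1⟩
  rcases h with h | h
  · exact ⟨1, .inl rfl, key 1 (by simpa using h)⟩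
  · exact ⟨-1, .inr rfl, key (-1) (by simpa using h)⟩

theorem stmt12_general (N : ℕ) (Q₁ Q₂ : ZMod N × ZMod N)
    (A : Matrix.SpecialLinearGroup (Fin 2) ℤ)
    (hA : (A : Matrix (Fin 2) (Fin 2) ℤ).map (Int.cast : ℤ → ZMod N) = 1 ∨
          (A : Matrix (Fin 2) (Fin 2) ℤ).map (Int.cast : ℤ → ZMod N) = -1)
    (τ : ℂ) (hτ : 0 < τ.im) :
    LambdaB N Q₁ Q₂
        (((A 0 0 : ℤ) * τ + (A 0 1 : ℤ)) / ((A 1 0 : ℤ) * τ + (A 1 1 : ℤ))) =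
      LambdaB N Q₁ Q₂ τ := by
  have hdet : A 0 0 * A 1 1 - A 0 1 * A 1 0 = 1 := (Matrix.det_fin_two _).symm.trans A.det_coe
  obtain ⟨ε, hε, h00, h01, h10, h11⟩ := exists_sign_modEq_of_map_eq_one_or_neg_one hA
  simp only [LambdaB, wp_phiPt_moebius hdet hε h00 h01 h10 h11 hτ.ne', ← mul_sub]
  exact mul_div_mul_left _ _ (pow_ne_zero 2 (int_mul_add_int_ne_zero hdet hτ.ne'))

/-- `Λ(τ; Q₁, Q₂)` is invariant under `{±I}·Γ(N)`. -/
theorem stmt12 (N : ℕ) (hN : 2 ≤ N) (Q₁ Q₂ : ZMod N × ZMod N)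
    (hbasis : IsUnit (Q₁.1 * Q₂.2 - Q₁.2 * Q₂.1))
    (A : Matrix.SpecialLinearGroup (Fin 2) ℤ)
    (hA : (A : Matrix (Fin 2) (Fin 2) ℤ).map (Int.cast : ℤ → ZMod N) = 1 ∨
          (A : Matrix (Fin 2) (Fin 2) ℤ).map (Int.cast : ℤ → ZMod N) = -1)
    (τ : ℂ) (hτ : 0 < τ.im) :
    LambdaB N Q₁ Q₂
        (((A 0 0 : ℤ) * τ + (A 0 1 : ℤ)) / ((A 1 0 : ℤ) * τ + (A 1 1 : ℤ))) =
      LambdaB N Q₁ Q₂ τ :=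
  stmt12_general N Q₁ Q₂ A hA τ hτ
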